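/- arXiv:2110.07351 — 4 statements merged into one kernel-verified Lean document; each statement's English description precedes it below -/
import Mathlib

section
/- Partial distances cannot decrease under single-coordinate shortening in the surviving positions: if K is an l×l invertible binary matrix with partial distances D_0,...,D_{l-1}, K' = s_{{j}}(K) is the shortened kernel on coordinate j, and a is the index of the last nonzero row in column j, then D'_k ≥ D_k for 0 ≤ k ≤ a-1, and D'_k = D_{k+1} for a ≤ k ≤ l-2, where D' is the partial distance profile of K'. -/
open Matrix Finset

/-- The "kernel code": the span of rows `i, i+1, ..., l-1` of `K`. -/
def rowSpan {l : ℕ} (K : Matrix (Fin l) (Fin l) (ZMod 2)) (i : ℕ) :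
    Submodule (ZMod 2) (Fin l → ZMod 2) :=
  Submodule.span (ZMod 2) {v | ∃ r : Fin l, i ≤ (r : ℕ) ∧ v = K r}

/-- The `i`-th partial distance: Hamming distance from row `i` to the span of later rows. -/
noncomputable def PD {l : ℕ} (K : Matrix (Fin l) (Fin l) (ZMod 2)) (i : Fin l) : ℕ :=
  sInf {d | ∃ c ∈ rowSpan K ((i : ℕ) + 1), hammingDist (K i) c = d}

/-- Equivalent additions used in single-coordinate shortening: add the row `a`
(the last row with a 1 in column `j`) to every earlier row having a 1 in column `j`. -/
def addRows {n : ℕ} (K : Matrix (Fin (n+1)) (Fin (n+1)) (ZMod 2)) (j a : Fin (n+1)) :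
    Matrix (Fin (n+1)) (Fin (n+1)) (ZMod 2) :=
  Matrix.of fun i => if i < a ∧ K i j = 1 then K i + K a else K i

/-- Single-coordinate shortening of `K` on column `j` with removed row `a`:
perform the equivalent additions, then delete row `a` and column `j`. -/
def shortenMat {n : ℕ} (K : Matrix (Fin (n+1)) (Fin (n+1)) (ZMod 2)) (j a : Fin (n+1)) :
    Matrix (Fin n) (Fin n) (ZMod 2) :=
  Matrix.of fun i k => addRows K j a (a.succAbove i) (j.succAbove k)

/-- Deleting a coordinate where two vectors agree preserves Hamming distance. -/
lemma dist_del {n : ℕ} (j : Fin (n+1)) (v w : Fin (n+1) → ZMod 2) (h : v j = w j) :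
    hammingDist (fun k => v (j.succAbove k)) (fun k => w (j.succAbove k)) = hammingDist v w := by
  classical
  have hv : ∀ (m : ℕ) (x y : Fin m → ZMod 2),
      hammingDist x y = ∑ i, if x i ≠ y i then 1 else 0 := by
    intro m x y; rw [hammingDist, Finset.card_filter]
  rw [hv, hv, Fin.sum_univ_succAbove _ j]
  simp [h]

section helpers

variable {n : ℕ} (K : Matrix (Fin (n+1)) (Fin (n+1)) (ZMod 2)) (j a : Fin (n+1))
variable (ha : K a j = 1) (hlast : ∀ b, a < b → K b j = 0)

lemma zmod2_cases (x : ZMod 2) : x = 0 ∨ x = 1 := by revert x; decide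

include ha hlast in
/-- Each modified row (other than row `a`) is 0 at `j` and lies in the original row span. -/
lemma rowM_mem (i : ℕ) (b : Fin (n+1)) (hb : b ≠ a) (hib : i ≤ (b : ℕ)) :
    addRows K j a b ∈ rowSpan K i ∧ addRows K j a b j = 0 := by
  by_cases h : b < a ∧ K b j = 1
  · have hMb : addRows K j a b = K b + K a := by
      show (if b < a ∧ K b j = 1 then K b + K a else K b) = _
      rw [if_pos h]
    constructor
    · rw [hMb]
      exact Submodule.add_mem _ (Submodule.subset_span ⟨b, hib, rfl⟩)
        (Submodule.subset_span ⟨a, le_trans hib (le_of_lt h.1), rfl⟩)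
    · rw [hMb]; show K b j + K a j = 0; rw [h.2, ha]; decide
  · have hMb : addRows K j a b = K b := by
      show (if b < a ∧ K b j = 1 then K b + K a else K b) = _
      rw [if_neg h]
    refine ⟨hMb ▸ Submodule.subset_span ⟨b, hib, rfl⟩, ?_⟩
    rw [hMb]
    rcases lt_trichotomy b a with hba | hba | hba
    · rcases zmod2_cases (K b j) with h0 | h1
      · exact h0
      · exact absurd ⟨hba, h1⟩ h
    · exact absurd hba hb
    · exact hlast b hba

lemma succAbove_val_ge (r : Fin n) : (r : ℕ) ≤ ((a.succAbove r : Fin (n+1)) : ℕ) := by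
  rcases lt_or_ge r.castSucc a with h | h
  · rw [Fin.succAbove_of_castSucc_lt _ _ h]; simp
  · rw [Fin.succAbove_of_le_castSucc _ _ h]; simp

include ha hlast in
/-- Lifting elements of the shortened row span back to the original row span. -/
lemma lift_span (m : ℕ) {c' : Fin n → ZMod 2} (hc' : c' ∈ rowSpan (shortenMat K j a) m) :
    ∃ c ∈ rowSpan K m, c j = 0 ∧ c' = fun t => c (j.succAbove t) := by
  induction hc' using Submodule.span_induction with
  | mem v hv =>
    obtain ⟨r, hr, rfl⟩ := hv
    refine ⟨addRows K j a (a.succAbove r), ?_, ?_, ?_⟩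
    · exact (rowM_mem K j a ha hlast m _ (Fin.succAbove_ne a r)
        (le_trans hr (succAbove_val_ge a r))).1
    · exact (rowM_mem K j a ha hlast m _ (Fin.succAbove_ne a r)
        (le_trans hr (succAbove_val_ge a r))).2
    · rfl
  | zero => exact ⟨0, Submodule.zero_mem _, rfl, rfl⟩
  | add x y hx hy ihx ihy =>
    obtain ⟨c1, hc1, hj1, rfl⟩ := ihx
    obtain ⟨c2, hc2, hj2, rfl⟩ := ihy
    exact ⟨c1 + c2, Submodule.add_mem _ hc1 hc2, by simp [hj1, hj2], rfl⟩
  | smul s x hx ihx =>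
    obtain ⟨c1, hc1, hj1, rfl⟩ := ihx
    exact ⟨s • c1, Submodule.smul_mem _ _ hc1, by simp [hj1], rfl⟩

include ha hlast in
/-- Sharper lifting when the start index is past `a`. -/
lemma lift_span' (m : ℕ) (hm : (a : ℕ) + 1 ≤ m) {c' : Fin n → ZMod 2}
    (hc' : c' ∈ rowSpan (shortenMat K j a) m) :
    ∃ c ∈ rowSpan K (m + 1), c j = 0 ∧ c' = fun t => c (j.succAbove t) := by
  induction hc' using Submodule.span_induction with
  | mem v hv =>
    obtain ⟨r, hr, rfl⟩ := hv
    have hra : a ≤ r.castSucc := by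
      rw [Fin.le_castSucc_iff]; rw [Fin.lt_iff_val_lt_val]; simp; omega
    have hsa : a.succAbove r = r.succ := Fin.succAbove_of_le_castSucc _ _ hra
    have hgt : a < r.succ := by rw [Fin.lt_iff_val_lt_val]; simp; omega
    have hM : addRows K j a r.succ = K r.succ := by
      show (if r.succ < a ∧ K r.succ j = 1 then K r.succ + K a else K r.succ) = _
      rw [if_neg]; rintro ⟨h1, -⟩; exact absurd (lt_trans hgt h1) (lt_irrefl a)
    refine ⟨K r.succ, Submodule.subset_span ⟨r.succ, by simp; omega, rfl⟩,
      hlast _ hgt, ?_⟩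
    funext t
    show addRows K j a (a.succAbove r) (j.succAbove t) = _
    rw [hsa, hM]
  | zero => exact ⟨0, Submodule.zero_mem _, rfl, rfl⟩
  | add x y hx hy ihx ihy =>
    obtain ⟨c1, hc1, hj1, rfl⟩ := ihx
    obtain ⟨c2, hc2, hj2, rfl⟩ := ihy
    exact ⟨c1 + c2, Submodule.add_mem _ hc1 hc2, by simp [hj1, hj2], rfl⟩
  | smul s x hx ihx =>
    obtain ⟨c1, hc1, hj1, rfl⟩ := ihx
    exact ⟨s • c1, Submodule.smul_mem _ _ hc1, by simp [hj1], rfl⟩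

include ha hlast in
/-- Pushing elements of the original row span (past row `a`) into the shortened row span. -/
lemma push_span (m : ℕ) (hm : (a : ℕ) + 1 ≤ m) {c : Fin (n+1) → ZMod 2}
    (hc : c ∈ rowSpan K (m + 1)) :
    c j = 0 ∧ (fun t => c (j.succAbove t)) ∈ rowSpan (shortenMat K j a) m := by
  induction hc using Submodule.span_induction with
  | mem v hv =>
    obtain ⟨b, hb, rfl⟩ := hv
    have hab : a < b := by rw [Fin.lt_iff_val_lt_val]; omega
    refine ⟨hlast b hab, ?_⟩
    have hb1 : 1 ≤ (b : ℕ) := by omega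
    have hbn : (b : ℕ) - 1 < n := by have := b.isLt; omega
    set r : Fin n := ⟨(b : ℕ) - 1, hbn⟩ with hr
    have hra : a ≤ r.castSucc := by
      rw [Fin.le_castSucc_iff, Fin.lt_iff_val_lt_val]; simp [hr]; omega
    have hsa : a.succAbove r = b := by
      rw [Fin.succAbove_of_le_castSucc _ _ hra]
      apply Fin.ext; simp [hr]; omega
    have hgt : ¬ (b < a) := by rw [not_lt]; exact le_of_lt hab
    refine Submodule.subset_span ⟨r, by simp [hr]; omega, ?_⟩
    funext t
    show K b (j.succAbove t) = addRows K j a (a.succAbove r) (j.succAbove t)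
    rw [hsa]
    show K b (j.succAbove t)
      = (if b < a ∧ K b j = 1 then K b + K a else K b) (j.succAbove t)
    rw [if_neg (fun h => hgt h.1)]
  | zero => exact ⟨rfl, Submodule.zero_mem _⟩
  | add x y hx hy ihx ihy =>
    refine ⟨by simp [ihx.1, ihy.1], ?_⟩
    have : (fun t => (x + y) (j.succAbove t))
        = (fun t => x (j.succAbove t)) + fun t => y (j.succAbove t) := rfl
    rw [this]; exact Submodule.add_mem _ ihx.2 ihy.2
  | smul s x hx ihx =>
    refine ⟨by simp [ihx.1], ?_⟩
    have : (fun t => (s • x) (j.succAbove t)) = s • fun t => x (j.succAbove t) := rfl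
    rw [this]; exact Submodule.smul_mem _ _ ihx.2

end helpers

theorem stmt5 {n : ℕ} (K : Matrix (Fin (n+1)) (Fin (n+1)) (ZMod 2)) (hK : IsUnit K)
    (j a : Fin (n+1)) (ha : K a j = 1) (hlast : ∀ b, a < b → K b j = 0) :
    ∀ k : Fin n,
      ((k : ℕ) < (a : ℕ) → PD K k.castSucc ≤ PD (shortenMat K j a) k) ∧
      ((a : ℕ) ≤ (k : ℕ) → PD (shortenMat K j a) k = PD K k.succ) := by
  intro k
  constructor
  · -- case k < a
    intro hka
    set K' := shortenMat K j a with hK'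
    have hne : {d | ∃ c ∈ rowSpan K' ((k : ℕ) + 1), hammingDist (K' k) c = d}.Nonempty :=
      ⟨hammingDist (K' k) 0, 0, Submodule.zero_mem _, rfl⟩
    have hmem : PD K' k ∈ {d | ∃ c ∈ rowSpan K' ((k : ℕ) + 1), hammingDist (K' k) c = d} :=
      Nat.sInf_mem hne
    obtain ⟨c', hc', hd⟩ := hmem
    obtain ⟨c, hc, hcj, rfl⟩ := lift_span K j a ha hlast ((k : ℕ) + 1) hc'
    -- identify K' k
    have hlt : k.castSucc < a := by rw [Fin.lt_iff_val_lt_val]; simpa using hka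
    have hsa : a.succAbove k = k.castSucc := Fin.succAbove_of_castSucc_lt _ _ hlt
    set b := k.castSucc with hb
    have hbne : b ≠ a := ne_of_lt hlt
    have hMj : addRows K j a b j = 0 :=
      (rowM_mem K j a ha hlast 0 b hbne (Nat.zero_le _)).2
    have hKk : K' k = fun t => addRows K j a b (j.succAbove t) := by
      funext t
      show addRows K j a (a.succAbove k) (j.succAbove t) = _
      rw [hsa]
    rw [hKk] at hd
    rw [dist_del j _ _ (by rw [hMj, hcj])] at hd
    -- produce an element of the PD set for K at k.castSucc
    have hmem2 : PD K' k ∈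
        {d | ∃ c ∈ rowSpan K (((k.castSucc : Fin (n+1)) : ℕ) + 1),
          hammingDist (K k.castSucc) c = d} := by
      simp only [Fin.coe_castSucc]
      by_cases h : b < a ∧ K b j = 1
      · have hMb : addRows K j a b = K b + K a := by
          show (if b < a ∧ K b j = 1 then K b + K a else K b) = _
          rw [if_pos h]
        refine ⟨c - K a, Submodule.sub_mem _ hc
          (Submodule.subset_span ⟨a, by omega, rfl⟩), ?_⟩
        rw [hMb] at hd
        rw [← hd, hammingDist_eq_hammingNorm, hammingDist_eq_hammingNorm]
        congr 1
        funext t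
        simp only [Pi.sub_apply, Pi.add_apply, Pi.neg_apply, hb]
        ring
      · have hMb : addRows K j a b = K b := by
          show (if b < a ∧ K b j = 1 then K b + K a else K b) = _
          rw [if_neg h]
        rw [hMb] at hd
        exact ⟨c, hc, hd⟩
    exact Nat.sInf_le hmem2
  · -- case a ≤ k
    intro hak
    set K' := shortenMat K j a with hK'
    have hra : a ≤ k.castSucc := by
      rw [Fin.le_castSucc_iff, Fin.lt_iff_val_lt_val]; simp; omega
    have hsa : a.succAbove k = k.succ := Fin.succAbove_of_le_castSucc _ _ hra
    have hgt : a < k.succ := by rw [Fin.lt_iff_val_lt_val]; simp; omega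
    have hM : addRows K j a k.succ = K k.succ := by
      show (if k.succ < a ∧ K k.succ j = 1 then K k.succ + K a else K k.succ) = _
      rw [if_neg]; rintro ⟨h1, -⟩; exact absurd (lt_trans hgt h1) (lt_irrefl a)
    have hKk : K' k = fun t => K k.succ (j.succAbove t) := by
      funext t
      show addRows K j a (a.succAbove k) (j.succAbove t) = _
      rw [hsa, hM]
    have hKj : K k.succ j = 0 := hlast _ hgt
    have hm : (a : ℕ) + 1 ≤ (k : ℕ) + 1 := by omega
    have hset : {d | ∃ c ∈ rowSpan K' ((k : ℕ) + 1), hammingDist (K' k) c = d}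
        = {d | ∃ c ∈ rowSpan K (((k.succ : Fin (n+1)) : ℕ) + 1),
            hammingDist (K k.succ) c = d} := by
      ext d
      simp only [Set.mem_setOf_eq, Fin.val_succ]
      constructor
      · rintro ⟨c', hc', rfl⟩
        obtain ⟨c, hc, hcj, rfl⟩ := lift_span' K j a ha hlast ((k : ℕ) + 1) hm hc'
        refine ⟨c, hc, ?_⟩
        rw [hKk, dist_del j _ _ (by rw [hKj, hcj])]
      · rintro ⟨c, hc, rfl⟩
        obtain ⟨hcj, hc'⟩ := push_span K j a ha hlast ((k : ℕ) + 1) hm hc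
        refine ⟨fun t => c (j.succAbove t), hc', ?_⟩
        rw [hKk, dist_del j _ _ (by rw [hKj, hcj])]
    show sInf _ = sInf _
    rw [hset]
end

section
/- For a kernel whose row weights equal its partial distances, single-coordinate shortening preserves the partial distances of rows not modified during shortening: let K be an l×l invertible binary matrix with wt(K[i]) = D_i for all i in [l], let a be the last nonzero row index in column j, and let X denote the set of row indices b < a with K[b,j] = 1. Then the partial distances D' of K' = s_{{j}}(K) satisfy D'_k = D_{k+1} for a ≤ k ≤ l-2, D_k ≤ D'_k ≤ wt(K'[k]) for k in X, and D'_k = D_k for k in [a] \ X. -/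
open Matrix Finset

def delc {n : ℕ} (j : Fin (n+1)) : (Fin (n+1) → ZMod 2) →ₗ[ZMod 2] (Fin n → ZMod 2) :=
  LinearMap.funLeft (ZMod 2) (ZMod 2) j.succAbove

section Span
variable {n : ℕ} (K : Matrix (Fin (n+1)) (Fin (n+1)) (ZMod 2)) (j a : Fin (n+1))

/-- The span of the rows `≥ m` of `addRows` at shifted indices. -/
def midSpan (m : ℕ) : Submodule (ZMod 2) (Fin (n+1) → ZMod 2) :=
  Submodule.span (ZMod 2) {v | ∃ r : Fin n, m ≤ (r : ℕ) ∧ v = addRows K j a (a.succAbove r)}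

lemma addRows_row (i : Fin (n+1)) :
    addRows K j a i = if i < a ∧ K i j = 1 then K i + K a else K i := rfl

lemma shorten_row (i : Fin n) : shortenMat K j a i = delc j (addRows K j a (a.succAbove i)) := rfl

lemma rowSpan_shorten (m : ℕ) :
    rowSpan (shortenMat K j a) m = Submodule.map (delc j) (midSpan K j a m) := by
  rw [rowSpan, midSpan, Submodule.map_span]
  congr 1
  ext w
  simp only [Set.mem_image, Set.mem_setOf_eq]
  constructor
  · rintro ⟨r, hr, rfl⟩
    exact ⟨addRows K j a (a.succAbove r), ⟨r, hr, rfl⟩, rfl⟩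
  · rintro ⟨v, ⟨r, hr, rfl⟩, rfl⟩
    exact ⟨r, hr, (shorten_row K j a r).symm⟩

lemma midSpan_of_ge (m : ℕ) (hm : (a : ℕ) ≤ m) :
    midSpan K j a m = rowSpan K (m + 1) := by
  rw [midSpan, rowSpan]
  congr 1
  ext v
  simp only [Set.mem_setOf_eq]
  constructor
  · rintro ⟨r, hr, rfl⟩
    have h1 : ¬ ((r.castSucc : Fin (n+1)) < a) := by
      simp only [Fin.lt_def, Fin.coe_castSucc, not_lt]
      omega
    have h2 : a.succAbove r = r.succ := by
      rw [Fin.succAbove, if_neg h1]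
    refine ⟨r.succ, by rw [Fin.val_succ]; omega, ?_⟩
    rw [h2, addRows_row, if_neg]
    rintro ⟨hlt, -⟩
    simp only [Fin.lt_def, Fin.val_succ] at hlt
    omega
  · rintro ⟨s, hs, rfl⟩
    have hs0 : s ≠ 0 := by
      intro h; rw [h] at hs; simp at hs
    refine ⟨s.pred hs0, ?_, ?_⟩
    · have := s.is_lt
      simp only [Fin.coe_pred]
      omega
    · have h2 : a.succAbove (s.pred hs0) = s := by
        rw [Fin.succAbove, if_neg, Fin.succ_pred]
        simp only [Fin.lt_def, Fin.coe_castSucc, Fin.coe_pred, not_lt]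
        have := s.is_lt
        omega
      rw [h2, addRows_row, if_neg]
      rintro ⟨hlt, -⟩
      simp only [Fin.lt_def] at hlt
      omega
end Span

section Span2
variable {n : ℕ} (K : Matrix (Fin (n+1)) (Fin (n+1)) (ZMod 2)) (j a : Fin (n+1))

lemma succAbove_cases (r : Fin n) :
    (((a.succAbove r : ℕ) = r) ∧ (r : ℕ) < a) ∨ (((a.succAbove r : ℕ) = r + 1) ∧ (a : ℕ) ≤ r) := by
  rw [Fin.succAbove]
  split_ifs with h
  · left
    simp only [Fin.lt_def, Fin.coe_castSucc] at h
    exact ⟨rfl, h⟩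
  · right
    simp only [Fin.lt_def, Fin.coe_castSucc, not_lt] at h
    exact ⟨rfl, h⟩

lemma addRows_j_eq_zero (ha : K a j = 1) (hlast : ∀ b, a < b → K b j = 0)
    (b : Fin (n+1)) (hb : b ≠ a) : addRows K j a b j = 0 := by
  have h01 : ∀ x : ZMod 2, x ≠ 1 → x = 0 := by decide
  rw [addRows_row]
  split_ifs with h
  · simp only [Pi.add_apply, h.2, ha]; decide
  · push_neg at h
    rcases lt_trichotomy b a with hba | hba | hba
    · exact h01 _ (h hba)
    · exact absurd hba hb
    · exact hlast b hba

lemma midSpan_of_le (m : ℕ) (hm : m ≤ (a : ℕ)) (ha : K a j = 1)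
    (hlast : ∀ b, a < b → K b j = 0) :
    midSpan K j a m = rowSpan K m ⊓
      LinearMap.ker (LinearMap.proj j : (Fin (n+1) → ZMod 2) →ₗ[ZMod 2] ZMod 2) := by
  have hle : midSpan K j a m ≤ rowSpan K m ⊓
      LinearMap.ker (LinearMap.proj j : (Fin (n+1) → ZMod 2) →ₗ[ZMod 2] ZMod 2) := by
    apply Submodule.span_le.2
    rintro v ⟨r, hr, rfl⟩
    have hbne : a.succAbove r ≠ a := Fin.succAbove_ne a r
    have hrb : m ≤ (a.succAbove r : ℕ) := by
      rcases succAbove_cases a r with ⟨h1, h2⟩ | ⟨h1, h2⟩ <;> omega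
    constructor
    · rw [SetLike.mem_coe, addRows_row]
      split_ifs with h
      · exact add_mem (Submodule.subset_span ⟨a.succAbove r, hrb, rfl⟩)
          (Submodule.subset_span ⟨a, hm, rfl⟩)
      · exact Submodule.subset_span ⟨a.succAbove r, hrb, rfl⟩
    · simp only [SetLike.mem_coe, LinearMap.mem_ker, LinearMap.proj_apply]
      exact addRows_j_eq_zero K j a ha hlast _ hbne
  refine le_antisymm hle ?_
  rintro c ⟨hcC, hcE⟩
  have hadd : K a + K a = 0 := by
    funext i; simp only [Pi.add_apply, Pi.zero_apply]; exact CharTwo.add_self_eq_zero _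
  have hsub : rowSpan K m ≤ midSpan K j a m ⊔ Submodule.span (ZMod 2) {K a} := by
    apply Submodule.span_le.2
    rintro v ⟨b, hbm, rfl⟩
    by_cases hba : b = a
    · subst hba; exact Submodule.mem_sup_right (Submodule.mem_span_singleton_self _)
    · obtain ⟨r, hr⟩ := Fin.exists_succAbove_eq hba
      have hmr : m ≤ (r : ℕ) := by
        rcases succAbove_cases a r with ⟨h1, h2⟩ | ⟨h1, h2⟩ <;> rw [hr] at h1 <;> omega
      have hAb : addRows K j a b ∈ midSpan K j a m :=
        Submodule.subset_span ⟨r, hmr, by rw [hr]⟩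
      rw [addRows_row] at hAb
      split_ifs at hAb with h
      · have hKb : K b = (K b + K a) + K a := by
          rw [add_assoc, hadd, add_zero]
        rw [hKb]
        exact add_mem (Submodule.mem_sup_left hAb)
          (Submodule.mem_sup_right (Submodule.mem_span_singleton_self _))
      · exact Submodule.mem_sup_left hAb
  obtain ⟨x, hx, y, hy, hxy⟩ := Submodule.mem_sup.1 (hsub hcC)
  obtain ⟨t, rfl⟩ := Submodule.mem_span_singleton.1 hy
  have hxj : x j = 0 := by
    have := (hle hx).2
    simpa only [SetLike.mem_coe, LinearMap.mem_ker, LinearMap.proj_apply] using this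
  have hcj : c j = 0 := by
    simpa only [SetLike.mem_coe, LinearMap.mem_ker, LinearMap.proj_apply] using hcE
  have ht : t = 0 := by
    have : c j = x j + t * K a j := by rw [← hxy]; simp [Pi.smul_apply, smul_eq_mul]
    rw [hcj, hxj, ha, zero_add, mul_one] at this
    exact this.symm
  rw [ht, zero_smul, add_zero] at hxy
  rw [← hxy]; exact hx

end Span2

section Main
variable {n : ℕ} (K : Matrix (Fin (n+1)) (Fin (n+1)) (ZMod 2)) (j a : Fin (n+1))

lemma succAbove_eq_castSucc' (k : Fin n) (hk : (k : ℕ) < (a : ℕ)) :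
    a.succAbove k = k.castSucc := by
  rw [Fin.succAbove, if_pos]
  exact Fin.lt_def.2 hk

lemma succAbove_eq_succ' (k : Fin n) (hk : (a : ℕ) ≤ (k : ℕ)) :
    a.succAbove k = k.succ := by
  rw [Fin.succAbove, if_neg]
  simp only [Fin.lt_def, Fin.coe_castSucc, not_lt]
  exact hk

lemma rowSpan_j_zero (hlast : ∀ b, a < b → K b j = 0) (m : ℕ) (hm : (a : ℕ) < m) :
    ∀ c ∈ rowSpan K m, c j = 0 := by
  have : rowSpan K m ≤
      LinearMap.ker (LinearMap.proj j : (Fin (n+1) → ZMod 2) →ₗ[ZMod 2] ZMod 2) := by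
    apply Submodule.span_le.2
    rintro v ⟨s, hs, rfl⟩
    simp only [SetLike.mem_coe, LinearMap.mem_ker, LinearMap.proj_apply]
    exact hlast s (Fin.lt_def.2 (by omega))
  intro c hc
  simpa only [LinearMap.mem_ker, LinearMap.proj_apply] using this hc

end Main

section Aux2
variable {n : ℕ}

lemma dist_delc' (j : Fin (n+1)) (v w : Fin (n+1) → ZMod 2) (h : v j = w j) :
    hammingDist (delc j v) (delc j w) = hammingDist v w := by
  simp only [hammingDist]
  rw [← Finset.card_image_of_injective
    ({k | delc j v k ≠ delc j w k} : Finset (Fin n))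
    (Fin.succAbove_right_injective (p := j))]
  congr 1
  ext i
  simp only [Finset.mem_image, Finset.mem_filter, Finset.mem_univ, true_and]
  constructor
  · rintro ⟨k, hk, rfl⟩; exact hk
  · intro hi
    have hij : i ≠ j := by rintro rfl; exact hi h
    obtain ⟨k, rfl⟩ := Fin.exists_succAbove_eq hij
    exact ⟨k, hi, rfl⟩

lemma distSet_delc (j : Fin (n+1)) (C : Submodule (ZMod 2) (Fin (n+1) → ZMod 2))
    (hC : ∀ c ∈ C, c j = 0) (v : Fin (n+1) → ZMod 2) (hv : v j = 0) :
    {d | ∃ c' ∈ Submodule.map (delc j) C, hammingDist (delc j v) c' = d}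
      = {d | ∃ c ∈ C, hammingDist v c = d} := by
  ext d
  simp only [Set.mem_setOf_eq, Submodule.mem_map]
  constructor
  · rintro ⟨c', ⟨c, hc, rfl⟩, rfl⟩
    exact ⟨c, hc, (dist_delc' j v c (by rw [hv, hC c hc])).symm⟩
  · rintro ⟨c, hc, rfl⟩
    exact ⟨delc j c, ⟨c, hc, rfl⟩, dist_delc' j v c (by rw [hv, hC c hc])⟩

end Aux2


theorem stmt6 {n : ℕ} (K : Matrix (Fin (n+1)) (Fin (n+1)) (ZMod 2)) (hK : IsUnit K)
    (hWt : ∀ i, hammingNorm (K i) = PD K i)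
    (j a : Fin (n+1)) (ha : K a j = 1) (hlast : ∀ b, a < b → K b j = 0) :
    ∀ k : Fin n,
      ((a : ℕ) ≤ (k : ℕ) → PD (shortenMat K j a) k = PD K k.succ) ∧
      ((k : ℕ) < (a : ℕ) → K k.castSucc j = 1 →
        PD K k.castSucc ≤ PD (shortenMat K j a) k ∧
        PD (shortenMat K j a) k ≤ hammingNorm (shortenMat K j a k)) ∧
      ((k : ℕ) < (a : ℕ) → K k.castSucc j ≠ 1 →
        PD (shortenMat K j a) k = PD K k.castSucc) := by
  intro k
  have hadd : K a + K a = 0 := by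
    funext i; simp only [Pi.add_apply, Pi.zero_apply]; exact CharTwo.add_self_eq_zero _
  refine ⟨?_, ?_, ?_⟩
  · -- Case a ≤ k
    intro hk
    have hrow : shortenMat K j a k = delc j (K k.succ) := by
      rw [shorten_row, succAbove_eq_succ' a k hk, addRows_row, if_neg]
      rintro ⟨hlt, -⟩
      simp only [Fin.lt_def, Fin.val_succ] at hlt
      omega
    have hspan : rowSpan (shortenMat K j a) ((k : ℕ) + 1)
        = Submodule.map (delc j) (rowSpan K ((k : ℕ) + 2)) := by
      rw [rowSpan_shorten, midSpan_of_ge K j a _ (by omega)]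
    rw [PD, PD, hspan, hrow]
    congr 1
    have := distSet_delc j (rowSpan K ((k : ℕ) + 2))
      (rowSpan_j_zero K j a hlast _ (by omega)) (K k.succ)
      (hlast k.succ (Fin.lt_def.2 (by simp only [Fin.val_succ]; omega)))
    simp only [Fin.val_succ]
    convert this using 3 <;> omega
  · -- Case k < a, K k j = 1
    intro hk hkj
    have hv : (K k.castSucc + K a) j = 0 := by
      simp only [Pi.add_apply, hkj, ha]; decide
    have hrow : shortenMat K j a k = delc j (K k.castSucc + K a) := by
      rw [shorten_row, succAbove_eq_castSucc' a k hk, addRows_row, if_pos]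
      exact ⟨Fin.lt_def.2 hk, hkj⟩
    set C := rowSpan K ((k : ℕ) + 1) ⊓
      LinearMap.ker (LinearMap.proj j : (Fin (n+1) → ZMod 2) →ₗ[ZMod 2] ZMod 2) with hCdef
    have hspan : rowSpan (shortenMat K j a) ((k : ℕ) + 1) = Submodule.map (delc j) C := by
      rw [rowSpan_shorten, midSpan_of_le K j a _ (by omega) ha hlast]
    have hCj : ∀ c ∈ C, c j = 0 := by
      intro c hc
      simpa only [SetLike.mem_coe, LinearMap.mem_ker, LinearMap.proj_apply] using hc.2
    have hset : {d | ∃ c ∈ rowSpan (shortenMat K j a) ((k : ℕ) + 1),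
        hammingDist (shortenMat K j a k) c = d}
        = {d | ∃ c ∈ C, hammingDist (K k.castSucc + K a) c = d} := by
      rw [hspan, hrow]
      exact distSet_delc j C hCj _ hv
    have hPDeq : PD (shortenMat K j a) k
        = sInf {d | ∃ c ∈ C, hammingDist (K k.castSucc + K a) c = d} := by
      rw [PD, hset]
    constructor
    · rw [hPDeq]
      have hne : {d | ∃ c ∈ C, hammingDist (K k.castSucc + K a) c = d}.Nonempty :=
        ⟨_, 0, Submodule.zero_mem C, rfl⟩
      obtain ⟨c, hc, hdc⟩ := Nat.sInf_mem hne
      rw [← hdc]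
      have hdist : hammingDist (K k.castSucc + K a) c
          = hammingDist (K k.castSucc) (c + K a) := by
        rw [hammingDist_eq_hammingNorm, hammingDist_eq_hammingNorm]
        congr 1
        funext i
        simp only [Pi.sub_apply, Pi.add_apply, CharTwo.sub_eq_add, Pi.neg_apply, CharTwo.neg_eq]
        ring
      rw [hdist, PD]
      apply Nat.sInf_le
      refine ⟨c + K a, ?_, rfl⟩
      have hcs : c ∈ rowSpan K ((k : ℕ) + 1) := hc.1
      have haS : K a ∈ rowSpan K ((k : ℕ) + 1) :=
        Submodule.subset_span ⟨a, by omega, rfl⟩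
      simp only [Fin.coe_castSucc]
      exact add_mem hcs haS
    · rw [PD]
      exact Nat.sInf_le ⟨0, Submodule.zero_mem _, hammingDist_zero_right _⟩
  · -- Case k < a, K k j ≠ 1
    intro hk hkj
    have h01 : ∀ x : ZMod 2, x ≠ 1 → x = 0 := by decide
    have hkj0 : K k.castSucc j = 0 := h01 _ hkj
    have hrow : shortenMat K j a k = delc j (K k.castSucc) := by
      rw [shorten_row, succAbove_eq_castSucc' a k hk, addRows_row, if_neg]
      rintro ⟨-, h1⟩
      exact hkj h1
    set C := rowSpan K ((k : ℕ) + 1) ⊓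
      LinearMap.ker (LinearMap.proj j : (Fin (n+1) → ZMod 2) →ₗ[ZMod 2] ZMod 2) with hCdef
    have hspan : rowSpan (shortenMat K j a) ((k : ℕ) + 1) = Submodule.map (delc j) C := by
      rw [rowSpan_shorten, midSpan_of_le K j a _ (by omega) ha hlast]
    have hCj : ∀ c ∈ C, c j = 0 := by
      intro c hc
      simpa only [SetLike.mem_coe, LinearMap.mem_ker, LinearMap.proj_apply] using hc.2
    have hset : {d | ∃ c ∈ rowSpan (shortenMat K j a) ((k : ℕ) + 1),
        hammingDist (shortenMat K j a k) c = d}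
        = {d | ∃ c ∈ C, hammingDist (K k.castSucc) c = d} := by
      rw [hspan, hrow]
      exact distSet_delc j C hCj _ hkj0
    rw [PD, hset]
    have hne : {d | ∃ c ∈ C, hammingDist (K k.castSucc) c = d}.Nonempty :=
      ⟨_, 0, Submodule.zero_mem C, rfl⟩
    apply le_antisymm
    · rw [← hWt]
      exact Nat.sInf_le ⟨0, Submodule.zero_mem _, hammingDist_zero_right _⟩
    · obtain ⟨c, hc, hdc⟩ := Nat.sInf_mem hne
      rw [← hdc, PD]
      apply Nat.sInf_le
      exact ⟨c, by simpa only [SetLike.mem_coe, Fin.coe_castSucc] using hc.1, rfl⟩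
end

section
/- Any invertible l×l binary matrix K can be transformed by equivalent additions (adding later rows to earlier rows) into an invertible matrix K' with the same kernel codes such that wt(K'[i]) = D_i for all i, where D is the common partial distance profile. -/
open Matrix Finset

lemma rowSpan_mono {l : ℕ} (K : Matrix (Fin l) (Fin l) (ZMod 2)) {i j : ℕ} (h : i ≤ j) :
    rowSpan K j ≤ rowSpan K i := by
  apply Submodule.span_mono
  rintro v ⟨r, hr, rfl⟩
  exact ⟨r, h.trans hr, rfl⟩

lemma row_mem_rowSpan {l : ℕ} (K : Matrix (Fin l) (Fin l) (ZMod 2)) {i : ℕ} {r : Fin l}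
    (h : i ≤ (r : ℕ)) : K r ∈ rowSpan K i :=
  Submodule.subset_span ⟨r, h, rfl⟩

lemma exists_coeffs {l : ℕ} (K : Matrix (Fin l) (Fin l) (ZMod 2)) (i : ℕ) {c : Fin l → ZMod 2}
    (hc : c ∈ rowSpan K i) :
    ∃ t : Fin l → ZMod 2, (∀ j : Fin l, (j : ℕ) < i → t j = 0) ∧ ∑ j, t j • K j = c := by
  have hset : {v | ∃ r : Fin l, i ≤ (r : ℕ) ∧ v = K r} =
      Set.range (fun r : {r : Fin l // i ≤ (r : ℕ)} => K r.1) := by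
    ext v; constructor
    · rintro ⟨r, hr, rfl⟩; exact ⟨⟨r, hr⟩, rfl⟩
    · rintro ⟨⟨r, hr⟩, rfl⟩; exact ⟨r, hr, rfl⟩
  rw [rowSpan, hset, Finsupp.mem_span_range_iff_exists_finsupp] at hc
  obtain ⟨g, hg⟩ := hc
  rw [Finsupp.sum_fintype _ _ (by intro; simp)] at hg
  refine ⟨fun j => if h : i ≤ (j : ℕ) then g ⟨j, h⟩ else 0, ?_, ?_⟩
  · intro j hj; simp [Nat.not_le.2 hj]
  · rw [← hg]
    rw [← Finset.sum_filter_add_sum_filter_not univ (fun j : Fin l => i ≤ (j:ℕ))]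
    rw [Finset.sum_eq_zero (s := univ.filter (fun j : Fin l => ¬ i ≤ (j:ℕ)))
      (by intro j hj; simp only [mem_filter] at hj; simp [hj.2]), add_zero]
    rw [Finset.sum_subtype (p := fun j : Fin l => i ≤ (j:ℕ)) (univ.filter (fun j : Fin l => i ≤ (j:ℕ)))
      (by intro x; simp) (fun j => (if h : i ≤ (j:ℕ) then g ⟨j, h⟩ else 0) • K j)]
    apply Finset.sum_congr rfl
    rintro ⟨r, hr⟩ _
    simp [hr]

/-- The distance-multiset from `x + e` to `M` equals that from `x`, when `e ∈ M`. -/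
lemma dist_set_eq {l : ℕ} (M : Submodule (ZMod 2) (Fin l → ZMod 2)) (x e : Fin l → ZMod 2)
    (he : e ∈ M) :
    {d | ∃ c ∈ M, hammingDist (x + e) c = d} = {d | ∃ c ∈ M, hammingDist x c = d} := by
  have key : ∀ c : Fin l → ZMod 2, hammingDist (x + e) c = hammingDist x (c - e) := by
    intro c
    rw [hammingDist_eq_hammingNorm, hammingDist_eq_hammingNorm]
    congr 1; ring
  ext d; constructor
  · rintro ⟨c, hc, rfl⟩
    exact ⟨c - e, M.sub_mem hc he, (key c).symm⟩
  · rintro ⟨c, hc, rfl⟩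
    refine ⟨c + e, M.add_mem hc he, ?_⟩
    rw [key]; congr 1; ring

theorem stmt11 {l : ℕ} (K : Matrix (Fin l) (Fin l) (ZMod 2)) (hK : IsUnit K) :
    ∃ T : Matrix (Fin l) (Fin l) (ZMod 2),
      T.BlockTriangular id ∧ (∀ i, T i i = 1) ∧ IsUnit (T * K) ∧
      (∀ i : Fin l, rowSpan (T * K) (i : ℕ) = rowSpan K (i : ℕ)) ∧
      (∀ i : Fin l, PD (T * K) i = PD K i) ∧
      (∀ i : Fin l, hammingNorm ((T * K) i) = PD K i) := by
  -- choose minimizers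
  have hne : ∀ i : Fin l, {d | ∃ c ∈ rowSpan K ((i : ℕ) + 1), hammingDist (K i) c = d}.Nonempty :=
    fun i => ⟨_, 0, Submodule.zero_mem _, rfl⟩
  have hmin : ∀ i : Fin l, ∃ c ∈ rowSpan K ((i : ℕ) + 1), hammingDist (K i) c = PD K i :=
    fun i => Nat.sInf_mem (hne i)
  choose c hcmem hcdist using hmin
  choose t ht0 htsum using fun i : Fin l => exists_coeffs K ((i : ℕ) + 1) (hcmem i)
  set T : Matrix (Fin l) (Fin l) (ZMod 2) :=
    fun i j => (if i = j then 1 else 0) + t i j with hT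
  -- basic facts about T
  have ht0' : ∀ i j : Fin l, (j : ℕ) ≤ (i : ℕ) → t i j = 0 := by
    intro i j hj; exact ht0 i j (Nat.lt_succ_of_le hj)
  have hTtri : T.BlockTriangular id := by
    intro i j hij
    simp only [id] at hij
    have : i ≠ j := fun h => absurd h (by rintro rfl; exact lt_irrefl _ hij)
    simp [hT, this, ht0' i j (le_of_lt (Fin.lt_iff_val_lt_val.mp hij))]
  have hTdiag : ∀ i, T i i = 1 := by
    intro i; simp [hT, ht0' i i le_rfl]
  -- key row formula
  have hrow : ∀ i : Fin l, (T * K) i = K i + c i := by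
    intro i
    funext j
    have : (T * K) i j = ∑ k, T i k * K k j := Matrix.mul_apply
    rw [this]
    have hsplit : ∀ k : Fin l, T i k * K k j
        = (if i = k then 1 else 0) * K k j + t i k * K k j := by
      intro k; rw [hT]; ring
    rw [Finset.sum_congr rfl (fun k _ => hsplit k), Finset.sum_add_distrib]
    have h1 : ∑ k, (if i = k then (1:ZMod 2) else 0) * K k j = K i j := by
      simp [Finset.sum_ite_eq]
    have h2 : ∑ k, t i k * K k j = c i j := by
      have := congrFun (htsum i) j
      simpa [Finset.sum_apply] using this
    rw [h1, h2]; rfl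
  -- rowSpan preservation
  have hspan : ∀ i : ℕ, rowSpan (T * K) i = rowSpan K i := by
    have hle : ∀ i : ℕ, rowSpan (T * K) i ≤ rowSpan K i := by
      intro i
      apply Submodule.span_le.2
      rintro v ⟨r, hr, rfl⟩
      rw [hrow r]
      exact Submodule.add_mem _ (row_mem_rowSpan K hr)
        (rowSpan_mono K (Nat.le_succ_of_le hr) (hcmem r))
    have hge : ∀ m i : ℕ, l ≤ i + m → rowSpan K i ≤ rowSpan (T * K) i := by
      intro m
      induction m with
      | zero =>
        intro i hi
        apply Submodule.span_le.2
        rintro v ⟨r, hr, rfl⟩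
        exact absurd (lt_of_lt_of_le r.2 (by simpa using hi)) (Nat.not_lt.2 hr)
      | succ m ih =>
        intro i hi
        apply Submodule.span_le.2
        rintro v ⟨r, hr, rfl⟩
        have hKr : K r = (T * K) r + c r := by
          rw [hrow r]
          funext j
          simp [Pi.add_apply]
          ring_nf
          rw [show (2:ZMod 2) = 0 from rfl, mul_zero, add_zero]
        rw [hKr]
        refine Submodule.add_mem _ (row_mem_rowSpan (T * K) hr) ?_
        exact rowSpan_mono (T * K) (Nat.le_succ_of_le hr)
          (ih ((r : ℕ) + 1) (by omega) (hcmem r))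
    intro i
    exact le_antisymm (hle i) (hge l i (by omega))
  -- PD preservation
  have hPD : ∀ i : Fin l, PD (T * K) i = PD K i := by
    intro i
    unfold PD
    rw [hspan ((i : ℕ) + 1), hrow i,
      dist_set_eq (rowSpan K ((i : ℕ) + 1)) (K i) (c i) (hcmem i)]
  refine ⟨T, hTtri, hTdiag, ?_, fun i => hspan i, hPD, ?_⟩
  · have hdetT : T.det = 1 := by
      rw [Matrix.det_of_upperTriangular hTtri]
      simp [hTdiag]
    have : IsUnit T := (Matrix.isUnit_iff_isUnit_det T).2 (by simp [hdetT])
    exact this.mul hK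
  · intro i
    rw [hrow i, ← hcdist i, hammingDist_eq_hammingNorm]
    congr 1
    funext j
    simp [Pi.add_apply, Pi.sub_apply, CharTwo.sub_eq_add]
end

section
/- For the 2^t × 2^t Arikan matrix F_t = [[1,0],[1,1]]^{⊗t}, the partial distance profile is D_i = 2^{wt(bin(i))}, where wt(bin(i)) is the number of ones in the binary expansion of i; equivalently, each row of F_t has weight equal to its partial distance. -/
open Matrix Finset

def F1 : Matrix (Fin 2) (Fin 2) (ZMod 2) := !![1, 0; 1, 1]

/-- The `2^t × 2^t` Arikan matrix `F_t = F1^{⊗ t}`. -/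
def FA : (t : ℕ) → Matrix (Fin (2 ^ t)) (Fin (2 ^ t)) (ZMod 2)
  | 0 => Matrix.of fun _ _ => 1
  | t + 1 =>
      Matrix.reindex (finProdFinEquiv.trans (finCongr (pow_succ 2 t).symm))
        (finProdFinEquiv.trans (finCongr (pow_succ 2 t).symm))
        (Matrix.kroneckerMap (· * ·) (FA t) F1)

/- ======================= auxiliary development ======================= -/

abbrev PDeqv (t : ℕ) : Fin (2^t) × Fin 2 ≃ Fin (2^(t+1)) :=
  finProdFinEquiv.trans (finCongr (pow_succ 2 t).symm)

lemma PDeqv_val {t : ℕ} (a : Fin (2^t)) (b : Fin 2) :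
    ((PDeqv t (a,b)) : ℕ) = 2 * a + b := by
  show ((b : ℕ) + 2 * a) = 2 * a + b; ring

lemma FA_succ_apply {t : ℕ} (a c : Fin (2^t)) (b d : Fin 2) :
    FA (t+1) (PDeqv t (a,b)) (PDeqv t (c,d)) = FA t a c * F1 b d := by
  show (Matrix.reindex (PDeqv t) (PDeqv t) (Matrix.kroneckerMap (· * ·) (FA t) F1))
      (PDeqv t (a,b)) (PDeqv t (c,d)) = _
  rw [Matrix.reindex_apply, Matrix.submatrix_apply, Equiv.symm_apply_apply,
    Equiv.symm_apply_apply]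
  rfl

/-- restriction to one of the two interleaved halves, as a linear map -/
def halfMap (t : ℕ) (d : Fin 2) :
    (Fin (2^(t+1)) → ZMod 2) →ₗ[ZMod 2] (Fin (2^t) → ZMod 2) where
  toFun x := fun c => x (PDeqv t (c, d))
  map_add' _ _ := rfl
  map_smul' _ _ := rfl

lemma halfMap_row {t : ℕ} (a : Fin (2^t)) (b d : Fin 2) :
    halfMap t d (FA (t+1) (PDeqv t (a,b))) = fun c => FA t a c * F1 b d := by
  funext c; exact FA_succ_apply a c b d

lemma norm_split {t : ℕ} (x : Fin (2^(t+1)) → ZMod 2) :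
    hammingNorm x = hammingNorm (halfMap t 0 x) + hammingNorm (halfMap t 1 x) := by
  simp only [hammingNorm, Finset.card_filter]
  rw [← Equiv.sum_comp (PDeqv t) (fun j => if x j ≠ 0 then 1 else 0)]
  rw [Fintype.sum_prod_type]
  rw [← Finset.sum_add_distrib]
  refine Finset.sum_congr rfl fun c _ => ?_
  rw [Fin.sum_univ_two]
  rfl

lemma hnorm_add_le {n : ℕ} (u v : Fin n → ZMod 2) :
    hammingNorm (u + v) ≤ hammingNorm u + hammingNorm v := by
  classical
  refine le_trans (Finset.card_le_card ?_) (Finset.card_union_le _ _)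
  intro i hi
  simp only [hammingNorm, Finset.mem_filter, Finset.mem_union, Finset.mem_univ, true_and] at *
  by_contra h
  push_neg at h
  exact hi (by simp [Pi.add_apply, h.1, h.2])

lemma sub_eq_add' {n : ℕ} (u v : Fin n → ZMod 2) : u - v = u + v := by
  funext c
  simp [sub_eq_add_neg, CharTwo.neg_eq]

lemma dist_eq_norm_add {n : ℕ} (x y : Fin n → ZMod 2) :
    hammingDist x y = hammingNorm (x + y) := by
  rw [hammingDist_eq_hammingNorm, neg_add_eq_sub, sub_eq_add', add_comm]

lemma rowSpan_map {l l' : ℕ} (K : Matrix (Fin l) (Fin l) (ZMod 2)) (n : ℕ)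
    (f : (Fin l → ZMod 2) →ₗ[ZMod 2] (Fin l' → ZMod 2))
    (N : Submodule (ZMod 2) (Fin l' → ZMod 2))
    (h : ∀ r : Fin l, n ≤ (r : ℕ) → f (K r) ∈ N) :
    ∀ c ∈ rowSpan K n, f c ∈ N := by
  intro c hc
  have hle : rowSpan K n ≤ N.comap f := by
    refine Submodule.span_le.2 ?_
    rintro v ⟨r, hr, rfl⟩
    exact h r hr
  exact hle hc

lemma PD_le {l : ℕ} (K : Matrix (Fin l) (Fin l) (ZMod 2)) (i : Fin l)
    (c : Fin l → ZMod 2) (hc : c ∈ rowSpan K ((i:ℕ)+1)) :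
    PD K i ≤ hammingDist (K i) c :=
  Nat.sInf_le ⟨c, hc, rfl⟩

lemma le_PD {l : ℕ} (K : Matrix (Fin l) (Fin l) (ZMod 2)) (i : Fin l) (m : ℕ)
    (h : ∀ c ∈ rowSpan K ((i:ℕ)+1), m ≤ hammingDist (K i) c) : m ≤ PD K i := by
  refine le_csInf ⟨_, 0, Submodule.zero_mem _, rfl⟩ ?_
  rintro d ⟨c, hc, rfl⟩
  exact h c hc

lemma count_two_mul (a : ℕ) : (2*a).bits.count true = a.bits.count true := by
  rcases eq_or_ne a 0 with rfl | h
  · simp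
  · rw [Nat.bit0_bits a h]; simp

lemma count_two_mul_add_one (a : ℕ) :
    (2*a+1).bits.count true = a.bits.count true + 1 := by
  rw [Nat.bit1_bits]; simp

lemma F1_00 : F1 0 0 = 1 := by decide
lemma F1_01 : F1 0 1 = 0 := by decide
lemma F1_10 : F1 1 0 = 1 := by decide
lemma F1_11 : F1 1 1 = 1 := by decide

lemma PD_main : ∀ t : ℕ, ∀ i : Fin (2^t),
    hammingNorm (FA t i) = 2 ^ ((i : ℕ).bits.count true) ∧
    PD (FA t) i = 2 ^ ((i : ℕ).bits.count true) := by
  intro t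
  induction t with
  | zero =>
    intro i
    have hiv : (i : ℕ) = 0 := by omega
    have h2 : (2:ℕ) ^ (((i:ℕ)).bits.count true) = 1 := by rw [hiv]; simp
    have hnorm : hammingNorm (FA 0 i) = 1 := by
      have h : FA 0 i = fun _ => 1 := rfl
      rw [h]; simp [hammingNorm]
    rw [h2]
    refine ⟨hnorm, le_antisymm ?_ ?_⟩
    · calc PD (FA 0) i ≤ hammingDist (FA 0 i) 0 :=
            PD_le _ _ 0 (Submodule.zero_mem _)
        _ = 1 := by rw [hammingDist_zero_right, hnorm]
    · refine le_PD _ _ _ ?_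
      intro c hc
      have hbot : rowSpan (FA 0) ((i:ℕ) + 1) ≤ ⊥ := by
        refine Submodule.span_le.2 ?_
        rintro v ⟨r, hr, rfl⟩
        exact absurd hr (by omega)
      have hc0 : c = 0 := (Submodule.mem_bot _).1 (hbot hc)
      subst hc0
      rw [hammingDist_zero_right, hnorm]
  | succ t ih =>
    intro i
    obtain ⟨⟨a, b⟩, rfl⟩ : ∃ p, PDeqv t p = i :=
      ⟨(PDeqv t).symm i, (PDeqv t).apply_symm_apply i⟩
    obtain ⟨ihn, ihp⟩ := ih a
    rcases (by omega : b = 0 ∨ b = 1) with rfl | rfl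
    · -- case b = 0 : i = 2a
      have hval : ((PDeqv t (a, 0)) : ℕ) = 2 * a := by
        rw [PDeqv_val]; simp
      have hcnt : ((PDeqv t (a, 0) : ℕ)).bits.count true = (a:ℕ).bits.count true := by
        rw [hval, count_two_mul]
      -- the sum of halves of the row is FA t a
      have hSrow : ∀ a' : Fin (2^t),
          (halfMap t 0 + halfMap t 1) (FA (t+1) (PDeqv t (a', 0))) = FA t a' := by
        intro a'
        have : (halfMap t 0 + halfMap t 1) (FA (t+1) (PDeqv t (a', 0)))
            = halfMap t 0 (FA (t+1) (PDeqv t (a', 0)))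
              + halfMap t 1 (FA (t+1) (PDeqv t (a', 0))) := rfl
        rw [this, halfMap_row, halfMap_row]
        funext c
        show FA t a' c * F1 0 0 + FA t a' c * F1 0 1 = FA t a' c
        rw [F1_00, F1_01]; ring
      have hSrow1 : ∀ a' : Fin (2^t),
          (halfMap t 0 + halfMap t 1) (FA (t+1) (PDeqv t (a', 1))) = 0 := by
        intro a'
        have : (halfMap t 0 + halfMap t 1) (FA (t+1) (PDeqv t (a', 1)))
            = halfMap t 0 (FA (t+1) (PDeqv t (a', 1)))
              + halfMap t 1 (FA (t+1) (PDeqv t (a', 1))) := rfl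
        rw [this, halfMap_row, halfMap_row]
        funext c
        show FA t a' c * F1 1 0 + FA t a' c * F1 1 1 = 0
        rw [F1_10, F1_11, mul_one, CharTwo.add_self_eq_zero]
      have hnorm : hammingNorm (FA (t+1) (PDeqv t (a,0)))
          = 2 ^ ((a:ℕ).bits.count true) := by
        rw [norm_split (FA (t+1) (PDeqv t (a,0)))]
        have h0 : halfMap t 0 (FA (t+1) (PDeqv t (a,0))) = FA t a := by
          rw [halfMap_row]; funext c
          show FA t a c * F1 0 0 = FA t a c; rw [F1_00, mul_one]
        have h1 : halfMap t 1 (FA (t+1) (PDeqv t (a,0))) = 0 := by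
          rw [halfMap_row]; funext c
          show FA t a c * F1 0 1 = 0; rw [F1_01, mul_zero]
        rw [h0, h1, hammingNorm_zero, add_zero, ihn]
      rw [hcnt]
      refine ⟨hnorm, le_antisymm ?_ ?_⟩
      · calc PD (FA (t+1)) (PDeqv t (a,0))
            ≤ hammingDist (FA (t+1) (PDeqv t (a,0))) 0 :=
              PD_le _ _ 0 (Submodule.zero_mem _)
          _ = 2 ^ ((a:ℕ).bits.count true) := by rw [hammingDist_zero_right, hnorm]
      · refine le_PD _ _ _ ?_
        intro c hc
        have hSc : (halfMap t 0 + halfMap t 1) c ∈ rowSpan (FA t) ((a:ℕ)+1) := by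
          refine rowSpan_map _ _ _ _ ?_ c hc
          intro r hr
          obtain ⟨⟨a', b'⟩, rfl⟩ : ∃ p, PDeqv t p = r :=
            ⟨(PDeqv t).symm r, (PDeqv t).apply_symm_apply r⟩
          rw [hval] at hr
          rw [PDeqv_val] at hr
          rcases (by omega : b' = 0 ∨ b' = 1) with rfl | rfl
          · rw [hSrow a']
            exact Submodule.subset_span ⟨a', by omega, rfl⟩
          · rw [hSrow1 a']
            exact Submodule.zero_mem _
        calc 2 ^ ((a:ℕ).bits.count true) = PD (FA t) a := ihp.symm
          _ ≤ hammingDist (FA t a) ((halfMap t 0 + halfMap t 1) c) := PD_le _ _ _ hSc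
          _ = hammingNorm (FA t a + (halfMap t 0 + halfMap t 1) c) := dist_eq_norm_add _ _
          _ = hammingNorm ((halfMap t 0 + halfMap t 1) (FA (t+1) (PDeqv t (a,0)) + c)) := by
              rw [map_add, hSrow a]
          _ = hammingNorm (halfMap t 0 (FA (t+1) (PDeqv t (a,0)) + c)
                + halfMap t 1 (FA (t+1) (PDeqv t (a,0)) + c)) := rfl
          _ ≤ hammingNorm (halfMap t 0 (FA (t+1) (PDeqv t (a,0)) + c))
                + hammingNorm (halfMap t 1 (FA (t+1) (PDeqv t (a,0)) + c)) :=
              hnorm_add_le _ _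
          _ = hammingNorm (FA (t+1) (PDeqv t (a,0)) + c) := (norm_split _).symm
          _ = hammingDist (FA (t+1) (PDeqv t (a,0))) c := (dist_eq_norm_add _ _).symm
    · -- case b = 1 : i = 2a + 1
      have hval : ((PDeqv t (a, 1)) : ℕ) = 2 * a + 1 := by
        rw [PDeqv_val]; simp
      have hcnt : ((PDeqv t (a, 1) : ℕ)).bits.count true
          = (a:ℕ).bits.count true + 1 := by
        rw [hval, count_two_mul_add_one]
      have hrow : ∀ d : Fin 2, ∀ a' : Fin (2^t),
          halfMap t d (FA (t+1) (PDeqv t (a', 1))) = FA t a' := by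
        intro d a'
        rw [halfMap_row]; funext c
        rcases (by omega : d = 0 ∨ d = 1) with rfl | rfl
        · show FA t a' c * F1 1 0 = FA t a' c; rw [F1_10, mul_one]
        · show FA t a' c * F1 1 1 = FA t a' c; rw [F1_11, mul_one]
      have hnorm : hammingNorm (FA (t+1) (PDeqv t (a,1)))
          = 2 ^ ((a:ℕ).bits.count true + 1) := by
        rw [norm_split (FA (t+1) (PDeqv t (a,1))), hrow 0 a, hrow 1 a, ihn, pow_succ]
        ring
      rw [hcnt]
      refine ⟨hnorm, le_antisymm ?_ ?_⟩
      · calc PD (FA (t+1)) (PDeqv t (a,1))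
            ≤ hammingDist (FA (t+1) (PDeqv t (a,1))) 0 :=
              PD_le _ _ 0 (Submodule.zero_mem _)
          _ = 2 ^ ((a:ℕ).bits.count true + 1) := by rw [hammingDist_zero_right, hnorm]
      · refine le_PD _ _ _ ?_
        intro c hc
        have hmem : ∀ d : Fin 2, halfMap t d c ∈ rowSpan (FA t) ((a:ℕ)+1) := by
          intro d
          refine rowSpan_map _ _ _ _ ?_ c hc
          intro r hr
          obtain ⟨⟨a', b'⟩, rfl⟩ : ∃ p, PDeqv t p = r :=
            ⟨(PDeqv t).symm r, (PDeqv t).apply_symm_apply r⟩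
          rw [hval] at hr
          rw [PDeqv_val] at hr
          have ha' : (a:ℕ) + 1 ≤ a' := by omega
          rcases (by omega : b' = 0 ∨ b' = 1) with rfl | rfl
          · rcases (by omega : d = 0 ∨ d = 1) with rfl | rfl
            · rw [halfMap_row]
              have : (fun c => FA t a' c * F1 0 0) = FA t a' := by
                funext c; rw [F1_00, mul_one]
              rw [this]
              exact Submodule.subset_span ⟨a', ha', rfl⟩
            · rw [halfMap_row]
              have : (fun c => FA t a' c * F1 0 1) = (0 : Fin (2^t) → ZMod 2) := by
                funext c; rw [F1_01, mul_zero]; rfl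
              rw [this]
              exact Submodule.zero_mem _
          · rw [hrow d a']
            exact Submodule.subset_span ⟨a', ha', rfl⟩
        have hd : ∀ d : Fin 2,
            2 ^ ((a:ℕ).bits.count true)
              ≤ hammingNorm (halfMap t d (FA (t+1) (PDeqv t (a,1)) + c)) := by
          intro d
          calc 2 ^ ((a:ℕ).bits.count true) = PD (FA t) a := ihp.symm
            _ ≤ hammingDist (FA t a) (halfMap t d c) := PD_le _ _ _ (hmem d)
            _ = hammingNorm (FA t a + halfMap t d c) := dist_eq_norm_add _ _
            _ = hammingNorm (halfMap t d (FA (t+1) (PDeqv t (a,1)) + c)) := by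
                rw [map_add, hrow d a]
        calc 2 ^ ((a:ℕ).bits.count true + 1)
            = 2 ^ ((a:ℕ).bits.count true) + 2 ^ ((a:ℕ).bits.count true) := by
              rw [pow_succ]; ring
          _ ≤ hammingNorm (halfMap t 0 (FA (t+1) (PDeqv t (a,1)) + c))
              + hammingNorm (halfMap t 1 (FA (t+1) (PDeqv t (a,1)) + c)) :=
              Nat.add_le_add (hd 0) (hd 1)
          _ = hammingNorm (FA (t+1) (PDeqv t (a,1)) + c) := (norm_split _).symm
          _ = hammingDist (FA (t+1) (PDeqv t (a,1))) c := (dist_eq_norm_add _ _).symm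

theorem stmt14 (t : ℕ) (i : Fin (2 ^ t)) :
    PD (FA t) i = 2 ^ ((i : ℕ).bits.count true) ∧
    hammingNorm ((FA t) i) = PD (FA t) i := by
  obtain ⟨h1, h2⟩ := PD_main t i
  exact ⟨h2, by rw [h1, h2]⟩
end
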